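/- Let β > 0 and suppose p and q satisfy p² + pq + q² = 3β. Then the function φ(x,t) = (p-q)·e^{A}/(e^{A}+e^{B}), with A = px + p²t + φ₀ and B = qx + q²t - φ₀ for any constant φ₀, satisfies the scalar potential Boussinesq equation φ_tt - 4βφ_xx + (1/3)φ_xxxx + 2(φ_x²)_x = 0. -/

import Mathlib

/-!
Writing `A - B = (p - q) x + (p² - q²) t + 2φ₀`, the kink is `φ = (p - q) σ(A - B)` with `σ` the
logistic sigmoid, a travelling wave of speed `-(p + q)`. For a travelling wave `C f(a x + w t + c)`
the Boussinesq operator collapses to an ODE expression in `f`; with `C = a = p - q`,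
`w = a (p + q)` and `3β = p² + pq + q²` it becomes `a⁵/3 · (f'''' - f'' + 12 f' f'')`.
Since `σ' = σ (1 - σ)`, every derivative of `σ` is a polynomial in `σ`, and this combination
vanishes identically (it is the derivative of the KdV soliton equation `σ''' = σ' - 6 σ'²`).
-/

open Polynomial Real

theorem iteratedDeriv_eq_eval_iterate {𝕜 : Type*} [NontriviallyNormedField 𝕜] {y : 𝕜 → 𝕜}
    {P : 𝕜[X]} (hy : ∀ u, HasDerivAt y (P.eval (y u)) u) (n : ℕ) :
    iteratedDeriv n y = fun u => ((fun Q => derivative Q * P)^[n] X).eval (y u) := by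
  induction n with
  | zero => funext u; simp
  | succ n ih =>
    funext u
    rw [iteratedDeriv_succ, ih, Function.iterate_succ_apply', eval_mul]
    exact ((Polynomial.hasDerivAt _ (y u)).comp u (hy u)).deriv

theorem iteratedDeriv_four_sigmoid (u : ℝ) :
    iteratedDeriv 4 sigmoid u =
      iteratedDeriv 2 sigmoid u - 12 * deriv sigmoid u * iteratedDeriv 2 sigmoid u := by
  have h := iteratedDeriv_eq_eval_iterate (P := X * (1 - X))
    (fun u => by simpa using hasDerivAt_sigmoid u)
  rw [← iteratedDeriv_one, h, h, h]
  simp only [Function.iterate_succ_apply', Function.iterate_zero_apply, derivative_X, one_mul,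
    derivative_mul, derivative_sub, derivative_one, zero_sub, mul_neg, mul_one, derivative_add,
    derivative_neg, neg_zero, add_zero, zero_mul, eval_mul, eval_add, eval_neg, eval_one,
    eval_sub, eval_X, eval_zero]
  ring

theorem exp_div_exp_add_exp (A B : ℝ) : exp A / (exp A + exp B) = sigmoid (A - B) := by
  rw [sigmoid_def, neg_sub, exp_sub]
  field_simp

theorem iteratedDeriv_comp_mul_add {𝕜 : Type*} [NontriviallyNormedField 𝕜] {n : ℕ}
    {f : 𝕜 → 𝕜} (hf : ContDiff 𝕜 n f) (a b x : 𝕜) :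
    iteratedDeriv n (fun y => f (a * y + b)) x = a ^ n * iteratedDeriv n f (a * x + b) := by
  have hfb : ContDiff 𝕜 n (fun z => f (z + b)) := hf.comp (contDiff_id.add contDiff_const)
  rw [iteratedDeriv_comp_const_mul hfb a, iteratedDeriv_comp_add_const]

theorem deriv_sq_deriv {𝕜 : Type*} [NontriviallyNormedField 𝕜] {g : 𝕜 → 𝕜}
    (hg : ContDiff 𝕜 2 g) (x : 𝕜) :
    deriv (fun y => deriv g y ^ 2) x = 2 * deriv g x * iteratedDeriv 2 g x := by
  rw [deriv_fun_pow (hg.differentiable_deriv_two x), iteratedDeriv_succ, iteratedDeriv_one]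
  ring

noncomputable def potentialBoussinesq (β : ℝ) (φ : ℝ → ℝ → ℝ) (x t : ℝ) : ℝ :=
  iteratedDeriv 2 (fun t' => φ x t') t
    - 4 * β * iteratedDeriv 2 (fun x' => φ x' t) x
    + (1/3) * iteratedDeriv 4 (fun x' => φ x' t) x
    + 2 * deriv (fun x' => (deriv (fun x'' => φ x'' t) x') ^ 2) x

theorem potentialBoussinesq_travelingWave {f : ℝ → ℝ} (hf : ContDiff ℝ 4 f)
    (β C a w c x t : ℝ) :
    potentialBoussinesq β (fun x t => C * f (a * x + w * t + c)) x t =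
      C * ((w ^ 2 - 4 * β * a ^ 2) * iteratedDeriv 2 f (a * x + w * t + c)
        + a ^ 4 / 3 * iteratedDeriv 4 f (a * x + w * t + c)
        + 4 * C * a ^ 3 * deriv f (a * x + w * t + c) * iteratedDeriv 2 f (a * x + w * t + c)) := by
  have hf₁ : ContDiff ℝ 1 f := hf.of_le (by norm_num)
  have hf₂ : ContDiff ℝ 2 f := hf.of_le (by norm_num)
  have hx : (fun x' => C * f (a * x' + w * t + c)) = fun x' => C * f (a * x' + (w * t + c)) := by
    simp only [add_assoc]
  have ht : (fun t' => C * f (a * x + w * t' + c)) = fun t' => C * f (w * t' + (a * x + c)) := by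
    funext t'; ring_nf
  have hslice : ContDiff ℝ 2 (fun x' => C * f (a * x' + (w * t + c))) :=
    contDiff_const.mul (hf₂.comp ((contDiff_const.mul contDiff_id).add contDiff_const))
  unfold potentialBoussinesq
  rw [ht, hx, deriv_sq_deriv hslice, ← iteratedDeriv_one]
  simp only [iteratedDeriv_const_mul_field]
  rw [iteratedDeriv_comp_mul_add hf, iteratedDeriv_comp_mul_add hf₂, iteratedDeriv_comp_mul_add hf₂,
    iteratedDeriv_comp_mul_add hf₁, iteratedDeriv_one,
    show w * t + (a * x + c) = a * x + w * t + c by ring,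
    show a * x + (w * t + c) = a * x + w * t + c by ring]
  ring

theorem potential_boussinesq_one_soliton_general (β p q φ₀ : ℝ)
    (hroots : p ^ 2 + p * q + q ^ 2 = 3 * β)
    (φ : ℝ → ℝ → ℝ)
    (hφ : ∀ x t, φ x t = (p - q) * Real.exp (p * x + p ^ 2 * t + φ₀) /
      (Real.exp (p * x + p ^ 2 * t + φ₀) + Real.exp (q * x + q ^ 2 * t - φ₀))) :
    ∀ x t,
      iteratedDeriv 2 (fun t' => φ x t') t
        - 4 * β * iteratedDeriv 2 (fun x' => φ x' t) x
        + (1/3) * iteratedDeriv 4 (fun x' => φ x' t) x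
        + 2 * deriv (fun x' => (deriv (fun x'' => φ x'' t) x') ^ 2) x = 0 := by
  intro x t
  have hkink : φ = fun x t => (p - q) * sigmoid ((p - q) * x + (p ^ 2 - q ^ 2) * t + 2 * φ₀) := by
    funext x t
    rw [hφ, mul_div_assoc, exp_div_exp_add_exp]
    ring_nf
  change potentialBoussinesq β φ x t = 0
  rw [hkink, potentialBoussinesq_travelingWave (contDiff_sigmoid.of_le le_top),
    iteratedDeriv_four_sigmoid]
  linear_combination (4 / 3) * (p - q) ^ 3 *
    iteratedDeriv 2 sigmoid ((p - q) * x + (p ^ 2 - q ^ 2) * t + 2 * φ₀) * hroots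

/-- The 1-soliton in kink form solves the scalar potential Boussinesq equation. -/
theorem potential_boussinesq_one_soliton (β p q φ₀ : ℝ) (hβ : 0 < β)
    (hroots : p ^ 2 + p * q + q ^ 2 = 3 * β)
    (φ : ℝ → ℝ → ℝ)
    (hφ : ∀ x t, φ x t = (p - q) * Real.exp (p * x + p ^ 2 * t + φ₀) /
      (Real.exp (p * x + p ^ 2 * t + φ₀) + Real.exp (q * x + q ^ 2 * t - φ₀))) :
    ∀ x t,
      iteratedDeriv 2 (fun t' => φ x t') t
        - 4 * β * iteratedDeriv 2 (fun x' => φ x' t) x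
        + (1/3) * iteratedDeriv 4 (fun x' => φ x' t) x
        + 2 * deriv (fun x' => (deriv (fun x'' => φ x'' t) x') ^ 2) x = 0 :=
  potential_boussinesq_one_soliton_general β p q φ₀ hroots φ hφ
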